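/- arXiv:1704.02881 — 2 statements merged into one kernel-verified Lean document; each statement's English description precedes it below -/
import Mathlib

section
/- For any q, n ∈ ℕ, the sum of c*_d(n) over all unitary divisors d of q equals q if q divides n, and equals 0 otherwise. -/
/-! The map `(d, k) ↦ k * (q / d)` is a bijection from the pairs with `d ∣∣ q`, `1 ≤ k ≤ d` and
`(k, d)_* = 1` onto `[1, q]`, with inverse `m ↦ (q / (m, q)_*, m / (m, q)_*)`. What makes this work
is that the unitary divisors of `q` are closed under `lcm`, so `(m, q)_*` is divisible by every
unitary divisor of `q` that divides `m`. The sum is therefore `∑_{m=1}^{q} e(mn/q)`, a full sum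
over the `q`-th roots of unity `e(n/q)^m`. -/

open Complex Finset

noncomputable section

/-- Number of distinct prime factors. -/
def omega (n : ℕ) : ℕ := n.primeFactors.card

/-- The unitary gcd `(k,q)_* = max {d : d ∣ k, d ∣∣ q}`. -/
def ugcd (k q : ℕ) : ℕ :=
  ((q.divisors).filter (fun d => d ∣ k ∧ Nat.Coprime d (q / d))).sup id

/-- The set of unitary divisors of `q`. -/
def unitaryDivisors (q : ℕ) : Finset ℕ :=
  q.divisors.filter (fun d => Nat.Coprime d (q / d))

/-- The unitary Ramanujan sum `c*_q(n)`. -/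
def cstar (q n : ℕ) : ℂ :=
  ∑ k ∈ Finset.Icc 1 q,
    if ugcd k q = 1 then Complex.exp (2 * Real.pi * Complex.I * k * n / q) else 0

/-- The classical Ramanujan sum `c_q(n)`. -/
def cc (q n : ℕ) : ℂ :=
  ∑ k ∈ Finset.Icc 1 q,
    if Nat.gcd k q = 1 then Complex.exp (2 * Real.pi * Complex.I * k * n / q) else 0

open Real

section UnitaryDivisors

variable {q d e g : ℕ}

theorem mem_unitaryDivisors : d ∈ unitaryDivisors q ↔ d ∣ q ∧ q ≠ 0 ∧ d.Coprime (q / d) := by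
  simp [unitaryDivisors, and_assoc]

theorem ne_zero_of_mem_unitaryDivisors (hd : d ∈ unitaryDivisors q) : q ≠ 0 :=
  (mem_unitaryDivisors.1 hd).2.1

theorem pos_of_mem_unitaryDivisors (hd : d ∈ unitaryDivisors q) : 0 < d :=
  Nat.pos_of_dvd_of_pos (mem_unitaryDivisors.1 hd).1
    (Nat.pos_of_ne_zero (ne_zero_of_mem_unitaryDivisors hd))

theorem one_mem_unitaryDivisors (hq : q ≠ 0) : 1 ∈ unitaryDivisors q :=
  mem_unitaryDivisors.2 ⟨one_dvd q, hq, Nat.coprime_one_left _⟩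

theorem div_mem_unitaryDivisors (hd : d ∈ unitaryDivisors q) : q / d ∈ unitaryDivisors q := by
  obtain ⟨hdq, hq, hcop⟩ := mem_unitaryDivisors.1 hd
  exact mem_unitaryDivisors.2
    ⟨Nat.div_dvd_of_dvd hdq, hq, by rw [Nat.div_div_self hdq hq]; exact hcop.symm⟩

/-- `q / lcm a b` divides both `q / a` and `q / b`. -/
theorem lcm_mem_unitaryDivisors {a b : ℕ} (ha : a ∈ unitaryDivisors q)
    (hb : b ∈ unitaryDivisors q) : a.lcm b ∈ unitaryDivisors q := by
  obtain ⟨haq, hq, ha'⟩ := mem_unitaryDivisors.1 ha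
  obtain ⟨hbq, -, hb'⟩ := mem_unitaryDivisors.1 hb
  have hlq : a.lcm b ∣ q := Nat.lcm_dvd haq hbq
  refine mem_unitaryDivisors.2 ⟨hlq, hq, Nat.Coprime.coprime_dvd_left (Nat.lcm_dvd_mul a b) ?_⟩
  exact Nat.Coprime.mul_left
    (ha'.coprime_dvd_right (Nat.div_dvd_div_left hlq (Nat.dvd_lcm_left a b)))
    (hb'.coprime_dvd_right (Nat.div_dvd_div_left hlq (Nat.dvd_lcm_right a b)))

theorem mul_mem_unitaryDivisors (hg : g ∈ unitaryDivisors q) (he : e ∈ unitaryDivisors (q / g)) :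
    g * e ∈ unitaryDivisors q := by
  obtain ⟨hgq, hq, hg'⟩ := mem_unitaryDivisors.1 hg
  obtain ⟨heq, -, he'⟩ := mem_unitaryDivisors.1 he
  refine mem_unitaryDivisors.2 ⟨Nat.mul_dvd_of_dvd_div hgq heq, hq, ?_⟩
  rw [← Nat.div_div_eq_div_mul]
  exact Nat.Coprime.mul_left (hg'.coprime_dvd_right (Nat.div_dvd_of_dvd heq)) he'

theorem mem_unitaryDivisors_div_of_mul_mem (hg : g ∣ q) (h : g * e ∈ unitaryDivisors q) :
    e ∈ unitaryDivisors (q / g) := by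
  obtain ⟨hgeq, hq, hge⟩ := mem_unitaryDivisors.1 h
  refine mem_unitaryDivisors.2 ⟨Nat.dvd_div_of_mul_dvd hgeq, ?_, ?_⟩
  · exact (Nat.div_pos (Nat.le_of_dvd (Nat.pos_of_ne_zero hq) hg)
      (Nat.pos_of_mul_pos_right (pos_of_mem_unitaryDivisors h))).ne'
  · rw [Nat.div_div_eq_div_mul]
    exact hge.coprime_dvd_left (dvd_mul_left e g)

end UnitaryDivisors

section UnitaryGcd

variable {q d m k : ℕ}

theorem ugcd_eq_sup (m q : ℕ) : ugcd m q = ((unitaryDivisors q).filter (· ∣ m)).sup id := by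
  simp only [ugcd, unitaryDivisors, Finset.filter_filter, and_comm]

theorem ugcd_mem (hq : q ≠ 0) : ugcd m q ∈ (unitaryDivisors q).filter (· ∣ m) := by
  obtain ⟨d, hd, hsup⟩ := Finset.exists_mem_eq_sup ((unitaryDivisors q).filter (· ∣ m))
    ⟨1, Finset.mem_filter.2 ⟨one_mem_unitaryDivisors hq, one_dvd m⟩⟩ id
  rw [ugcd_eq_sup, hsup]
  exact hd

theorem ugcd_mem_unitaryDivisors (hq : q ≠ 0) : ugcd m q ∈ unitaryDivisors q :=
  (Finset.mem_filter.1 (ugcd_mem hq)).1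

theorem ugcd_dvd (hq : q ≠ 0) : ugcd m q ∣ m :=
  (Finset.mem_filter.1 (ugcd_mem hq)).2

theorem le_ugcd (hd : d ∈ unitaryDivisors q) (hdm : d ∣ m) : d ≤ ugcd m q := by
  rw [ugcd_eq_sup]
  exact Finset.le_sup (f := id) (Finset.mem_filter.2 ⟨hd, hdm⟩)

theorem dvd_ugcd (hd : d ∈ unitaryDivisors q) (hdm : d ∣ m) : d ∣ ugcd m q := by
  have hq := ne_zero_of_mem_unitaryDivisors hd
  have hg := ugcd_mem_unitaryDivisors (m := m) hq
  have hl : d.lcm (ugcd m q) ≤ ugcd m q :=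
    le_ugcd (lcm_mem_unitaryDivisors hd hg) (Nat.lcm_dvd hdm (ugcd_dvd hq))
  have hl0 : 0 < d.lcm (ugcd m q) :=
    Nat.lcm_pos (pos_of_mem_unitaryDivisors hd) (pos_of_mem_unitaryDivisors hg)
  rw [← le_antisymm hl (Nat.le_of_dvd hl0 (Nat.dvd_lcm_right _ _))]
  exact Nat.dvd_lcm_left _ _

theorem ugcd_mul_div (hd : d ∈ unitaryDivisors q) (hk : ugcd k d = 1) :
    ugcd (k * (q / d)) q = q / d := by
  obtain ⟨hdq, hq, -⟩ := mem_unitaryDivisors.1 hd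
  have hc := div_mem_unitaryDivisors hd
  obtain ⟨t, ht⟩ := dvd_ugcd (m := k * (q / d)) hc (dvd_mul_left _ _)
  have htd : t ∈ unitaryDivisors d := by
    rw [← Nat.div_div_self hdq hq]
    exact mem_unitaryDivisors_div_of_mul_mem (Nat.div_dvd_of_dvd hdq)
      (ht ▸ ugcd_mem_unitaryDivisors hq)
  have htk : t ∣ k := by
    have := ht ▸ ugcd_dvd (m := k * (q / d)) hq
    rw [mul_comm k] at this
    exact (Nat.mul_dvd_mul_iff_left (pos_of_mem_unitaryDivisors hc)).1 this
  have ht1 : t ∣ 1 := hk ▸ dvd_ugcd htd htk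
  rw [ht, Nat.dvd_one.1 ht1, mul_one]

theorem ugcd_div_ugcd (hq : q ≠ 0) : ugcd (m / ugcd m q) (q / ugcd m q) = 1 := by
  have hg := ugcd_mem_unitaryDivisors (m := m) hq
  have hc : q / ugcd m q ≠ 0 := (pos_of_mem_unitaryDivisors (div_mem_unitaryDivisors hg)).ne'
  have he := ugcd_mem_unitaryDivisors (m := m / ugcd m q) hc
  have hge : ugcd m q * ugcd (m / ugcd m q) (q / ugcd m q) ≤ ugcd m q :=
    le_ugcd (mul_mem_unitaryDivisors hg he) (Nat.mul_dvd_of_dvd_div (ugcd_dvd hq) (ugcd_dvd hc))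
  have he1 : ugcd (m / ugcd m q) (q / ugcd m q) ≤ 1 :=
    Nat.le_of_mul_le_mul_left (by rwa [mul_one]) (pos_of_mem_unitaryDivisors hg)
  exact le_antisymm he1 (pos_of_mem_unitaryDivisors he)

end UnitaryGcd

theorem sum_unitaryDivisors_sum_ugcd_eq_one {M : Type*} [AddCommMonoid M] (F : ℚ → M) (q : ℕ) :
    ∑ d ∈ unitaryDivisors q, ∑ k ∈ (Icc 1 d).filter (ugcd · d = 1), F (k / d) =
      ∑ m ∈ Icc 1 q, F (m / q) := by
  rw [sum_sigma']
  refine sum_nbij' (fun p => p.2 * (q / p.1)) (fun m => ⟨q / ugcd m q, m / ugcd m q⟩)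
    ?_ ?_ ?_ ?_ ?_
  · rintro ⟨d, k⟩ hdk
    obtain ⟨hd, hk⟩ := mem_sigma.1 hdk
    obtain ⟨hk1, hkd⟩ := mem_Icc.1 (mem_filter.1 hk).1
    have hc := pos_of_mem_unitaryDivisors (div_mem_unitaryDivisors hd)
    refine mem_Icc.2 ⟨Nat.mul_pos hk1 hc, ?_⟩
    calc k * (q / d) ≤ d * (q / d) := Nat.mul_le_mul_right _ hkd
      _ = q := Nat.mul_div_cancel' (mem_unitaryDivisors.1 hd).1
  · intro m hm
    obtain ⟨hm1, hmq⟩ := mem_Icc.1 hm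
    have hq : q ≠ 0 := by omega
    have hg := pos_of_mem_unitaryDivisors (ugcd_mem_unitaryDivisors (m := m) hq)
    refine mem_sigma.2 ⟨div_mem_unitaryDivisors (ugcd_mem_unitaryDivisors hq), mem_filter.2
      ⟨mem_Icc.2 ⟨?_, Nat.div_le_div_right hmq⟩, ugcd_div_ugcd hq⟩⟩
    exact (Nat.one_le_div_iff hg).2 (Nat.le_of_dvd hm1 (ugcd_dvd hq))
  · rintro ⟨d, k⟩ hdk
    obtain ⟨hd, hk⟩ := mem_sigma.1 hdk
    obtain ⟨hdq, hq, -⟩ := mem_unitaryDivisors.1 hd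
    have hc := pos_of_mem_unitaryDivisors (div_mem_unitaryDivisors hd)
    simp only [ugcd_mul_div hd (mem_filter.1 hk).2, Nat.div_div_self hdq hq,
      Nat.mul_div_cancel _ hc]
  · intro m hm
    have hq : q ≠ 0 := by have := mem_Icc.1 hm; omega
    have hgq := (mem_unitaryDivisors.1 (ugcd_mem_unitaryDivisors (m := m) hq)).1
    simp only [Nat.div_div_self hgq hq, Nat.div_mul_cancel (ugcd_dvd hq)]
  · rintro ⟨d, k⟩ hdk
    obtain ⟨hd, -⟩ := mem_sigma.1 hdk
    obtain ⟨hdq, hq, -⟩ := mem_unitaryDivisors.1 hd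
    have hd0 : (d : ℚ) ≠ 0 := Nat.cast_ne_zero.2 (pos_of_mem_unitaryDivisors hd).ne'
    simp only [Nat.cast_mul, Nat.cast_div hdq hd0]
    field_simp

theorem sum_Icc_one_eq_sum_range {M : Type*} [AddCommMonoid M] {f : ℕ → M} {q : ℕ}
    (hf : f q = f 0) : ∑ m ∈ Icc 1 q, f m = ∑ m ∈ range q, f m := by
  rcases Nat.eq_zero_or_pos q with rfl | hq
  · simp
  rw [← Finset.Ico_add_one_right_eq_Icc, sum_Ico_succ_top (by omega), range_eq_Ico,
    sum_eq_sum_Ico_succ_bot hq, hf, add_comm]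

theorem sum_Icc_exp_eq (q n : ℕ) :
    ∑ m ∈ Icc 1 q, exp (2 * π * I * (m / q) * n) = if q ∣ n then (q : ℂ) else 0 := by
  rcases eq_or_ne q 0 with rfl | hq
  · simp
  set ω := exp (2 * π * I / q)
  have hω : IsPrimitiveRoot ω q := Complex.isPrimitiveRoot_exp q hq
  have hterm (m : ℕ) : exp (2 * π * I * (m / q) * n) = (ω ^ n) ^ m := by
    rw [← pow_mul, ← Complex.exp_nat_mul]
    push_cast
    ring_nf
  have hperiod : (ω ^ n) ^ q = 1 := by rw [← pow_mul, mul_comm, pow_mul, hω.pow_eq_one, one_pow]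
  simp only [hterm]
  rw [sum_Icc_one_eq_sum_range (by rw [hperiod, pow_zero])]
  split_ifs with hqn
  · simp [(hω.pow_eq_one_iff_dvd n).2 hqn]
  · rw [geom_sum_eq (mt (hω.pow_eq_one_iff_dvd n).1 hqn), hperiod, sub_self, zero_div]

theorem cstar_eq_sum_filter (d n : ℕ) :
    cstar d n =
      ∑ k ∈ (Icc 1 d).filter (ugcd · d = 1), exp (2 * π * I * ((k / d : ℚ) : ℂ) * n) := by
  rw [cstar, sum_filter]
  congr! 3
  push_cast
  ring

theorem stmt2_general (q n : ℕ) :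
    ∑ d ∈ unitaryDivisors q, cstar d n = if q ∣ n then (q : ℂ) else 0 := by
  simp only [cstar_eq_sum_filter]
  rw [sum_unitaryDivisors_sum_ugcd_eq_one (fun x : ℚ => exp (2 * π * I * x * n)),
    ← sum_Icc_exp_eq]
  push_cast
  rfl

theorem stmt2 (q n : ℕ) (hq : 1 ≤ q) (hn : 1 ≤ n) :
    ∑ d ∈ unitaryDivisors q, cstar d n = if q ∣ n then (q : ℂ) else 0 :=
  stmt2_general q n
end
end

section
/- For any prime p, Σ_{k=1}^{p²} c*_p(k) · c*_{p²}(k) = p²(p − 1); in particular this sum is nonzero, so the unitary Ramanujan sums do not satisfy the orthogonality relation that holds for classical Ramanujan sums. -/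
/-!
For a prime power `q = p ^ ν` the unitary divisors of `q` are only `1` and `q`, so among
`1, …, q` the residue `q` is the only one not unitarily coprime to `q`. Hence `c*_q(n)` is the
complete exponential sum `q · [q ∣ n]` minus the term `1` at `k = q`. The product
`c*_p(k) c*_{p²}(k)` is then a combination of divisibility indicators, and the multiples of `d`
in `1, …, p²` number `p² / d`.
-/

open Complex Finset

noncomputable section

theorem Nat.coprime_pow_pow_iff {p : ℕ} (hp : p.Prime) {a b : ℕ} :
    Nat.Coprime (p ^ a) (p ^ b) ↔ a = 0 ∨ b = 0 := by
  refine ⟨fun h => ?_, ?_⟩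
  · by_contra! hab
    have hdvd : p ∣ Nat.gcd (p ^ a) (p ^ b) :=
      Nat.dvd_gcd (dvd_pow_self p hab.1) (dvd_pow_self p hab.2)
    exact hp.not_dvd_one (h ▸ hdvd)
  · rintro (rfl | rfl) <;> simp

theorem unitaryDivisors_prime_pow {p : ℕ} (hp : p.Prime) (ν : ℕ) :
    unitaryDivisors (p ^ ν) = {1, p ^ ν} := by
  ext d
  simp only [unitaryDivisors, mem_filter, Nat.mem_divisors, mem_insert, mem_singleton]
  constructor
  · rintro ⟨⟨hd, -⟩, hcop⟩
    obtain ⟨i, hi, rfl⟩ := (Nat.dvd_prime_pow hp).mp hd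
    rw [Nat.pow_div hi hp.pos, Nat.coprime_pow_pow_iff hp] at hcop
    rcases hcop with rfl | hνi
    · exact Or.inl (pow_zero p)
    · exact Or.inr (by rw [Nat.le_antisymm hi (Nat.sub_eq_zero_iff_le.mp hνi)])
  · rintro (rfl | rfl)
    · simp [hp.ne_zero]
    · simp [hp.ne_zero, Nat.div_self (pow_pos hp.pos ν)]

theorem ugcd_eq_sup_unitaryDivisors (k q : ℕ) :
    ugcd k q = ((unitaryDivisors q).filter (· ∣ k)).sup id := by
  simp only [ugcd, unitaryDivisors, filter_filter, and_comm]

theorem ugcd_prime_pow {p : ℕ} (hp : p.Prime) (ν k : ℕ) :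
    ugcd k (p ^ ν) = if p ^ ν ∣ k then p ^ ν else 1 := by
  rw [ugcd_eq_sup_unitaryDivisors, unitaryDivisors_prime_pow hp, filter_insert,
    filter_singleton, if_pos (one_dvd k)]
  split_ifs with hk
  · simp [Nat.one_le_pow ν p hp.pos]
  · simp

theorem sum_Icc_exp_eq_ite {q : ℕ} (hq : q ≠ 0) (n : ℕ) :
    ∑ k ∈ Icc 1 q, exp (2 * Real.pi * I * k * n / q) = if q ∣ n then (q : ℂ) else 0 := by
  set ζ := exp (2 * Real.pi * I / q)
  have hζ : IsPrimitiveRoot ζ q := Complex.isPrimitiveRoot_exp q hq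
  have hterm : ∀ k : ℕ, exp (2 * Real.pi * I * k * n / q) = (ζ ^ n) ^ k := fun k => by
    rw [← pow_mul, ← Complex.exp_nat_mul]
    congr 1
    push_cast
    ring
  simp only [hterm]
  split_ifs with hqn
  · simp [(hζ.pow_eq_one_iff_dvd n).mpr hqn]
  · have hne : ζ ^ n ≠ 1 := mt (hζ.pow_eq_one_iff_dvd n).mp hqn
    have hper : (ζ ^ n) ^ q = 1 := by rw [← pow_mul, mul_comm, pow_mul, hζ.pow_eq_one, one_pow]
    rw [← Ico_add_one_right_eq_Icc, sum_Ico_eq_sum_range, Nat.add_sub_cancel]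
    simp only [pow_add, pow_one, ← mul_sum, geom_sum_eq hne, hper, sub_self, zero_div, mul_zero]

theorem cstar_prime_pow {p : ℕ} (hp : p.Prime) {ν : ℕ} (hν : ν ≠ 0) (n : ℕ) :
    cstar (p ^ ν) n = (if p ^ ν ∣ n then (p : ℂ) ^ ν else 0) - 1 := by
  have hq : p ^ ν ≠ 0 := pow_ne_zero ν hp.ne_zero
  have hcoprime : ∀ k ∈ Icc 1 (p ^ ν), ugcd k (p ^ ν) = 1 ↔ k ≠ p ^ ν := fun k hk => by
    obtain ⟨hk1, hkq⟩ := mem_Icc.mp hk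
    rw [ugcd_prime_pow hp]
    split_ifs with hdvd
    · simp [hp.ne_one, hν, Nat.le_antisymm hkq (Nat.le_of_dvd hk1 hdvd)]
    · simp only [true_iff]
      rintro rfl
      exact hdvd dvd_rfl
  rw [cstar, sum_congr rfl fun k hk => if_congr (hcoprime k hk) rfl rfl, ← sum_filter,
    filter_ne', sum_erase_eq_sub (mem_Icc.mpr ⟨Nat.one_le_iff_ne_zero.mpr hq, le_rfl⟩),
    sum_Icc_exp_eq_ite hq]
  have hlast : exp (2 * Real.pi * I * (p ^ ν : ℕ) * n / (p ^ ν : ℕ)) = 1 := by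
    rw [Complex.exp_eq_one_iff]
    have hq' : ((p ^ ν : ℕ) : ℂ) ≠ 0 := Nat.cast_ne_zero.mpr hq
    exact ⟨n, by rw [Int.cast_natCast]; field_simp⟩
  rw [hlast]
  push_cast
  rfl

theorem cstar_prime {p : ℕ} (hp : p.Prime) (n : ℕ) :
    cstar p n = (if p ∣ n then (p : ℂ) else 0) - 1 := by
  simpa using cstar_prime_pow hp one_ne_zero n

theorem sum_Icc_ite_dvd {M : Type*} [AddCommMonoid M] (N d : ℕ) (c : M) :
    ∑ k ∈ Icc 1 N, (if d ∣ k then c else 0) = (N / d) • c := by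
  rw [← sum_filter, sum_const, ← Nat.Ioc_filter_dvd_card_eq_div,
    ← Icc_add_one_left_eq_Ioc, zero_add]

theorem stmt11 (p : ℕ) (hp : p.Prime) :
    (∑ k ∈ Finset.Icc 1 (p ^ 2), cstar p k * cstar (p ^ 2) k) = (p : ℂ) ^ 2 * ((p : ℂ) - 1)
    ∧ (∑ k ∈ Finset.Icc 1 (p ^ 2), cstar p k * cstar (p ^ 2) k) ≠ 0 := by
  have hterm : ∀ k, cstar p k * cstar (p ^ 2) k =
      (if p ^ 2 ∣ k then (p : ℂ) ^ 3 - p ^ 2 else 0) - (if p ∣ k then (p : ℂ) else 0)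
        + 1 := by
    intro k
    rw [cstar_prime hp, cstar_prime_pow hp two_ne_zero]
    by_cases hk : p ^ 2 ∣ k
    · simp only [hk, (dvd_pow_self p two_ne_zero).trans hk, if_true]
      ring
    · split_ifs <;> ring
  have hsum : ∑ k ∈ Icc 1 (p ^ 2), cstar p k * cstar (p ^ 2) k = (p : ℂ) ^ 2 * (p - 1) := by
    rw [sum_congr rfl fun k _ => hterm k, sum_add_distrib, sum_sub_distrib, sum_Icc_ite_dvd,
      sum_Icc_ite_dvd, sum_const, Nat.card_Icc, Nat.div_self (pow_pos hp.pos 2),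
      Nat.div_eq_of_eq_mul_left hp.pos (sq p), Nat.add_sub_cancel]
    ring
  have hp0 : (p : ℂ) ≠ 0 := Nat.cast_ne_zero.mpr hp.ne_zero
  have hp1 : (p : ℂ) - 1 ≠ 0 := sub_ne_zero.mpr (by exact_mod_cast hp.one_lt.ne')
  exact ⟨hsum, hsum ▸ mul_ne_zero (pow_ne_zero 2 hp0) hp1⟩
end
end
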